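/- For every prime p > 7, one has t(p) + 2·l(p) − 1 ≤ 2·log₂(p − 1) − 1, where l(p) and t(p) are the length and tail of the sequence of lower halves of p, and log₂ denotes the real base-2 logarithm. -/

import Mathlib

/-- The lower half of a positive integer: `lh m = ⌊m/2⌋`. -/
def lh (m : ℕ) : ℕ := m / 2

/-- The length of the sequence of lower halves of `n`: the least positive `i`
such that the `i`-th iterate of `lh` at `n` lies in `{2, 3, 4}`. -/
noncomputable def lhLen (n : ℕ) : ℕ :=
  sInf {i : ℕ | 0 < i ∧ lh^[i] n ∈ ({2, 3, 4} : Set ℕ)}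

/-- The tail of the sequence of lower halves of `n`: its last term. -/
noncomputable def lhTail (n : ℕ) : ℕ := lh^[lhLen n] n

/-! Writing `t = t(n)` and `l = l(n)`, the tail is `⌊n / 2^l⌋`, so `t * 2^l ≤ n`, strictly when
`n` is odd since `l > 0`. As `2^t ≤ t^2` for `t ∈ {2, 3, 4}`, this gives
`2^(t + 2l) ≤ (t * 2^l)^2 ≤ (n - 1)^2`, and taking base-2 logarithms yields the bound. -/

lemma lh_iterate (i n : ℕ) : lh^[i] n = n / 2 ^ i := by
  induction i generalizing n with
  | zero => simp
  | succ k ih =>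
    rw [Function.iterate_succ_apply, ih, lh, Nat.div_div_eq_div_mul, pow_succ']

lemma exists_lh_iterate_mem {n : ℕ} (hn : 4 ≤ n) :
    ∃ i, 0 < i ∧ lh^[i] n ∈ ({2, 3, 4} : Set ℕ) := by
  induction n using Nat.strong_induction_on with
  | _ n ih =>
    by_cases hsmall : n < 10
    · refine ⟨1, one_pos, ?_⟩
      simp only [Function.iterate_one, lh, Set.mem_insert_iff, Set.mem_singleton_iff]
      omega
    · obtain ⟨i, hi, hmem⟩ := ih (n / 2) (by omega) (by omega)
      exact ⟨i + 1, i.succ_pos, hmem⟩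

lemma lhLen_pos_and_lhTail_mem {n : ℕ} (hn : 4 ≤ n) :
    0 < lhLen n ∧ lhTail n ∈ ({2, 3, 4} : Set ℕ) :=
  Nat.sInf_mem (exists_lh_iterate_mem hn)

lemma lhTail_mul_two_pow_lhLen_lt {n : ℕ} (hn : 4 ≤ n) (hodd : Odd n) :
    lhTail n * 2 ^ lhLen n < n := by
  have hle : lhTail n * 2 ^ lhLen n ≤ n := by
    rw [lhTail, lh_iterate]
    exact Nat.div_mul_le_self n _
  refine hle.lt_of_ne fun heq => ?_
  have hlen : lhLen n ≠ 0 := (lhLen_pos_and_lhTail_mem hn).1.ne'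
  exact hodd.not_two_dvd_nat (heq ▸ (dvd_pow_self 2 hlen).mul_left _)

lemma two_pow_le_sq_of_mem {t : ℕ} (ht : t ∈ ({2, 3, 4} : Set ℕ)) : 2 ^ t ≤ t ^ 2 := by
  rcases ht with rfl | rfl | rfl <;> norm_num

lemma two_pow_lhTail_add_two_mul_lhLen_le {n : ℕ} (hn : 4 ≤ n) (hodd : Odd n) :
    2 ^ (lhTail n + 2 * lhLen n) ≤ (n - 1) ^ 2 :=
  calc 2 ^ (lhTail n + 2 * lhLen n) = 2 ^ lhTail n * (2 ^ lhLen n) ^ 2 := by ring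
    _ ≤ lhTail n ^ 2 * (2 ^ lhLen n) ^ 2 :=
      Nat.mul_le_mul_right _ (two_pow_le_sq_of_mem (lhLen_pos_and_lhTail_mem hn).2)
    _ = (lhTail n * 2 ^ lhLen n) ^ 2 := by ring
    _ ≤ (n - 1) ^ 2 := by
      gcongr
      have := lhTail_mul_two_pow_lhLen_lt hn hodd
      omega

theorem tail_add_two_len_sub_one_le_logb (p : ℕ) (hp : p.Prime) (h7 : 7 < p) :
    (lhTail p : ℝ) + 2 * (lhLen p : ℝ) - 1 ≤ 2 * Real.logb 2 ((p : ℝ) - 1) - 1 := by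
  have hpow := two_pow_lhTail_add_two_mul_lhLen_le (by omega) (hp.odd_of_ne_two (by omega))
  have hcast : ((p - 1 : ℕ) : ℝ) = (p : ℝ) - 1 := by push_cast [show 1 ≤ p by omega]; ring
  suffices (lhTail p : ℝ) + 2 * lhLen p ≤ Real.logb 2 (((p - 1 : ℕ) : ℝ) ^ 2) by
    rw [Real.logb_pow, Nat.cast_ofNat, hcast] at this
    linarith
  rw [Real.le_logb_iff_rpow_le one_lt_two (by positivity [show 1 < p - 1 by omega])]
  exact_mod_cast hpow
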